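/- arXiv:nlin/0611063 — 6 statements merged into one kernel-verified Lean document; each statement's English description precedes it below -/
import Mathlib

section
/- For any integers k, k', k'' with 1 ≤ |k|, |k'|, |k''| ≤ N-1 and k + k' + k'' ≡ 0 (mod N), one has sin(kπ/N) + sin(k'π/N) + sin(k''π/N) ≠ 0. -/
set_option maxHeartbeats 1000000


open Real

lemma aux_bounds (N : ℕ) (hN : 2 ≤ N) (k : ℤ) (h1 : 1 ≤ |k|) (h2 : |k| ≤ (N : ℤ) - 1) :
    Real.sin (k * π / (2 * N)) ≠ 0 ∧ Real.cos (k * π / (2 * N)) ≠ 0 := by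
  have hNr : (0:ℝ) < N := by positivity
  have hkr : |(k:ℝ)| ≤ (N:ℝ) - 1 := by exact_mod_cast h2
  have hk0 : (k:ℝ) ≠ 0 := by
    intro h
    have : k = 0 := by exact_mod_cast h
    simp [this] at h1
  have habs : |(k:ℝ) * π / (2 * N)| < π / 2 := by
    rw [abs_div, abs_mul, abs_of_pos pi_pos, abs_of_pos (by positivity : (0:ℝ) < 2 * N)]
    rw [div_lt_div_iff₀ (by positivity) (by norm_num)]
    nlinarith [pi_pos, abs_nonneg (k:ℝ)]
  have h1' : -(π/2) < (k:ℝ) * π / (2 * N) := by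
    have := abs_lt.mp habs; linarith [this.1]
  have h2' : (k:ℝ) * π / (2 * N) < π / 2 := (abs_lt.mp habs).2
  constructor
  · intro h
    rw [Real.sin_eq_zero_iff_of_lt_of_lt (by linarith [pi_pos]) (by linarith [pi_pos])] at h
    apply hk0
    have hπ : π ≠ 0 := pi_ne_zero
    field_simp at h
    simpa [hπ] using h
  · exact ne_of_gt (Real.cos_pos_of_mem_Ioo ⟨h1', h2'⟩)

lemma factor_id (a b : ℝ) :
    2 * Real.sin a * Real.cos a + 2 * Real.sin b * Real.cos b =
      4 * Real.sin a * Real.sin b * (Real.sin a * Real.cos b + Real.cos a * Real.sin b)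
      + 2 * (Real.sin a * Real.cos b + Real.cos a * Real.sin b) *
          (Real.cos a * Real.cos b - Real.sin a * Real.sin b) := by
  linear_combination (-2 * Real.sin a * Real.cos a) * (Real.sin_sq_add_cos_sq b)
    + (-2 * Real.sin b * Real.cos b) * (Real.sin_sq_add_cos_sq a)

lemma factor_id' (a b : ℝ) :
    2 * Real.sin a * Real.cos a + 2 * Real.sin b * Real.cos b =
      4 * Real.cos a * Real.cos b * (Real.sin a * Real.cos b + Real.cos a * Real.sin b)
      - 2 * (Real.sin a * Real.cos b + Real.cos a * Real.sin b) *
          (Real.cos a * Real.cos b - Real.sin a * Real.sin b) := by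
  linear_combination (-2 * Real.sin a * Real.cos a) * (Real.sin_sq_add_cos_sq b)
    + (-2 * Real.sin b * Real.cos b) * (Real.sin_sq_add_cos_sq a)

theorem stmt_0 (N : ℕ) (hN : 2 ≤ N) (k k' k'' : ℤ)
    (hk : 1 ≤ |k| ∧ |k| ≤ (N : ℤ) - 1)
    (hk' : 1 ≤ |k'| ∧ |k'| ≤ (N : ℤ) - 1)
    (hk'' : 1 ≤ |k''| ∧ |k''| ≤ (N : ℤ) - 1)
    (hsum : (N : ℤ) ∣ k + k' + k'') :
    Real.sin (k * π / N) + Real.sin (k' * π / N) + Real.sin (k'' * π / N) ≠ 0 := by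
  obtain ⟨m, hm⟩ := hsum
  have hNr : (0:ℝ) < N := by positivity
  have hNne : (N:ℝ) ≠ 0 := ne_of_gt hNr
  set a := (k:ℝ) * π / (2 * N) with ha
  set b := (k':ℝ) * π / (2 * N) with hb
  set u := (k'':ℝ) * π / (2 * N) with hu
  obtain ⟨hsa, hca⟩ := aux_bounds N hN k hk.1 hk.2
  obtain ⟨hsb, hcb⟩ := aux_bounds N hN k' hk'.1 hk'.2
  obtain ⟨hsu, hcu⟩ := aux_bounds N hN k'' hk''.1 hk''.2
  have hmr : (k:ℝ) + k' + k'' = N * m := by exact_mod_cast hm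
  have hxa : (k:ℝ) * π / N = 2 * a := by rw [ha]; field_simp; try ring
  have hxb : (k':ℝ) * π / N = 2 * b := by rw [hb]; field_simp; try ring
  have hsin2a : Real.sin ((k:ℝ) * π / N) = 2 * Real.sin a * Real.cos a := by
    rw [hxa, Real.sin_two_mul]; try ring
  have hsin2b : Real.sin ((k':ℝ) * π / N) = 2 * Real.sin b * Real.cos b := by
    rw [hxb, Real.sin_two_mul]; try ring
  rcases Int.even_or_odd m with ⟨j, hj⟩ | ⟨j, hj⟩
  · -- m = 2j : a + b = jπ - u
    have hab : a + b = (j:ℝ) * π - u := by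
      rw [ha, hb, hu]
      have : (k':ℝ) = N * m - k - k'' := by linarith
      rw [this]
      have hjm : (m:ℝ) = j + j := by exact_mod_cast hj
      rw [hjm]; field_simp; try ring
    have hsab : Real.sin (a + b) = -(Real.cos ((j:ℝ)*π) * Real.sin u) := by
      rw [hab, Real.sin_sub, Real.sin_int_mul_pi]; ring
    have hsabne : Real.sin (a + b) ≠ 0 := by
      rw [hsab]
      have := Real.abs_cos_int_mul_pi j
      intro h
      apply hsu
      have hc : Real.cos ((j:ℝ)*π) ≠ 0 := by
        intro h'; rw [h'] at this; norm_num at this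
      field_simp at h
      simpa [hc, hu] using h
    -- sin(k''π/N) = sin(2jπ - (2a+2b)) = -sin(2a+2b)
    have ht : (k'':ℝ) * π / N = (j:ℤ) * (2 * π) - (2*a + 2*b) := by
      have : (k'':ℝ) = N * m - k - k' := by linarith
      rw [ha, hb, this]
      have hjm : (m:ℝ) = j + j := by exact_mod_cast hj
      rw [hjm]; push_cast; field_simp; try ring
    have hsint : Real.sin ((k'':ℝ) * π / N) = -Real.sin (2*a + 2*b) := by
      rw [ht, Real.sin_sub]
      have h1 : Real.sin ((j:ℤ) * (2 * π)) = 0 := by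
        have : ((j:ℤ):ℝ) * (2 * π) = ((2*j : ℤ):ℝ) * π := by push_cast; ring
        rw [this, Real.sin_int_mul_pi]
      have h2 : Real.cos ((j:ℤ) * (2 * π)) = 1 := Real.cos_int_mul_two_pi j
      rw [h1, h2]; ring
    have h2ab : Real.sin (2*a + 2*b) = 2 * Real.sin (a+b) * Real.cos (a+b) := by
      have : 2*a + 2*b = 2 * (a + b) := by ring
      rw [this, Real.sin_two_mul]
    rw [hsin2a, hsin2b, hsint, h2ab, Real.sin_add, Real.cos_add]
    have key := factor_id a b
    intro h
    have : 4 * Real.sin a * Real.sin b * (Real.sin a * Real.cos b + Real.cos a * Real.sin b) = 0 := by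
      nlinarith [key]
    rw [← Real.sin_add] at this
    rcases mul_eq_zero.mp this with h' | h'
    · rcases mul_eq_zero.mp h' with h'' | h''
      · rcases mul_eq_zero.mp h'' with h''' | h'''
        · norm_num at h'''
        · exact hsa h'''
      · exact hsb h''
    · exact hsabne h'
  · -- m = 2j+1 : a + b = jπ + π/2 - u
    have hjm : (m:ℝ) = 2 * j + 1 := by exact_mod_cast hj
    have hab : a + b = (j:ℝ) * π + (π/2 - u) := by
      rw [ha, hb, hu]
      have : (k':ℝ) = N * m - k - k'' := by linarith
      rw [this, hjm]; field_simp; try ring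
    have hsab : Real.sin (a + b) = Real.cos ((j:ℝ)*π) * Real.cos u := by
      rw [hab, Real.sin_add, Real.sin_int_mul_pi, Real.sin_pi_div_two_sub]; ring
    have hsabne : Real.sin (a + b) ≠ 0 := by
      rw [hsab]
      have := Real.abs_cos_int_mul_pi j
      have hc : Real.cos ((j:ℝ)*π) ≠ 0 := by
        intro h'; rw [h'] at this; norm_num at this
      exact mul_ne_zero hc hcu
    have ht : (k'':ℝ) * π / N = ((j:ℤ) * (2 * π) + π) - (2*a + 2*b) := by
      have : (k'':ℝ) = N * m - k - k' := by linarith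
      rw [ha, hb, this, hjm]; push_cast; field_simp; try ring
    have hsint : Real.sin ((k'':ℝ) * π / N) = Real.sin (2*a + 2*b) := by
      rw [ht, Real.sin_sub]
      have h1 : Real.sin ((j:ℤ) * (2 * π) + π) = 0 := by
        have : ((j:ℤ):ℝ) * (2 * π) + π = ((2*j+1 : ℤ):ℝ) * π := by push_cast; ring
        rw [this, Real.sin_int_mul_pi]
      have h2 : Real.cos ((j:ℤ) * (2 * π) + π) = -1 := Real.cos_int_mul_two_pi_add_pi j
      rw [h1, h2]; ring
    have h2ab : Real.sin (2*a + 2*b) = 2 * Real.sin (a+b) * Real.cos (a+b) := by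
      have : 2*a + 2*b = 2 * (a + b) := by ring
      rw [this, Real.sin_two_mul]
    rw [hsin2a, hsin2b, hsint, h2ab, Real.sin_add, Real.cos_add]
    have key := factor_id' a b
    intro h
    have : 4 * Real.cos a * Real.cos b * (Real.sin a * Real.cos b + Real.cos a * Real.sin b) = 0 := by
      nlinarith [key]
    rw [← Real.sin_add] at this
    rcases mul_eq_zero.mp this with h' | h'
    · rcases mul_eq_zero.mp h' with h'' | h''
      · rcases mul_eq_zero.mp h'' with h''' | h'''
        · norm_num at h'''
        · exact hca h'''
      · exact hcb h''
    · exact hsabne h'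
end

section
/- Let N ≥ 3 be odd and set f(γ) := 1 - 2 Σ_{k=1}^{N-1} (1 + γ/sin²(kπ/N))^{-1}. Then f(γ) < 0 for all γ with 0 < γ ≤ 1. -/
open Real Finset

lemma sin_ge_aux (x : ℝ) (hl : π / 3 ≤ x) (hr : x ≤ 2 * π / 3) :
    Real.sqrt 3 / 2 ≤ Real.sin x := by
  have hpi := Real.pi_pos
  have h1 : Real.sin x = Real.cos (x - π / 2) := (Real.cos_sub_pi_div_two x).symm
  have h2 : Real.cos (x - π / 2) = Real.cos |x - π / 2| := (Real.cos_abs _).symm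
  have h3 : |x - π / 2| ≤ π / 6 := by
    rw [abs_le]; constructor <;> linarith
  have h4 : Real.cos (π / 6) ≤ Real.cos |x - π / 2| := by
    apply Real.cos_le_cos_of_nonneg_of_le_pi (abs_nonneg _) (by linarith) h3
  rw [h1, h2]
  calc Real.sqrt 3 / 2 = Real.cos (π / 6) := (Real.cos_pi_div_six).symm
    _ ≤ _ := h4

lemma term_ge_aux (γ : ℝ) (h0 : 0 < γ) (h1 : γ ≤ 1) (x : ℝ)
    (hl : π / 3 ≤ x) (hr : x ≤ 2 * π / 3) :
    (3 : ℝ) / 7 ≤ (1 + γ / Real.sin x ^ 2)⁻¹ := by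
  have hs : Real.sqrt 3 / 2 ≤ Real.sin x := sin_ge_aux x hl hr
  have hsq : (3 : ℝ) / 4 ≤ Real.sin x ^ 2 := by
    nlinarith [Real.sq_sqrt (show (0:ℝ) ≤ 3 by norm_num), Real.sqrt_nonneg 3]
  have hpos : (0 : ℝ) < Real.sin x ^ 2 := by linarith
  have hd : γ / Real.sin x ^ 2 ≤ 4 / 3 := by
    rw [div_le_iff₀ hpos]; nlinarith
  have hdpos : 0 ≤ γ / Real.sin x ^ 2 := div_nonneg h0.le hpos.le
  have h7 : (0 : ℝ) < 1 + γ / Real.sin x ^ 2 := by linarith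
  have : (1 + γ / Real.sin x ^ 2) ≤ 7 / 3 := by linarith
  calc (3 : ℝ) / 7 = (7 / 3 : ℝ)⁻¹ := by norm_num
    _ ≤ (1 + γ / Real.sin x ^ 2)⁻¹ := by
        apply inv_anti₀ h7 this

theorem stmt_5 (N : ℕ) (hN : 3 ≤ N) (hodd : Odd N) (γ : ℝ) (h0 : 0 < γ) (h1 : γ ≤ 1) :
    1 - 2 * ∑ k ∈ Finset.Icc 1 (N - 1), (1 + γ / Real.sin (k * π / N) ^ 2)⁻¹ < 0 := by
  obtain ⟨m, rfl⟩ := hodd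
  have hm : 1 ≤ m := by omega
  have hpi := Real.pi_pos
  have hM : (0 : ℝ) < (2 * m + 1 : ℕ) := by positivity
  have hmr : (1 : ℝ) ≤ (m : ℝ) := by exact_mod_cast hm
  -- the two special terms
  set g : ℕ → ℝ := fun k => (1 + γ / Real.sin (k * π / (2 * m + 1 : ℕ)) ^ 2)⁻¹ with hg
  have hnonneg : ∀ k ∈ Finset.Icc 1 (2 * m + 1 - 1), 0 ≤ g k := by
    intro k _
    apply inv_nonneg.mpr
    have : 0 ≤ γ / Real.sin (k * π / (2 * m + 1 : ℕ)) ^ 2 := by positivity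
    linarith
  have hsub : ({m, m + 1} : Finset ℕ) ⊆ Finset.Icc 1 (2 * m + 1 - 1) := by
    intro k hk
    simp only [Finset.mem_insert, Finset.mem_singleton] at hk
    simp only [Finset.mem_Icc]
    omega
  have hpair : ∑ k ∈ ({m, m + 1} : Finset ℕ), g k = g m + g (m + 1) :=
    Finset.sum_pair (by omega)
  have hsum : g m + g (m + 1) ≤ ∑ k ∈ Finset.Icc 1 (2 * m + 1 - 1), g k := by
    rw [← hpair]
    exact Finset.sum_le_sum_of_subset_of_nonneg hsub (fun k hk _ => hnonneg k hk)
  have hgm : (3 : ℝ) / 7 ≤ g m := by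
    apply term_ge_aux γ h0 h1
    · rw [le_div_iff₀ hM]
      push_cast
      nlinarith [mul_nonneg hpi.le (sub_nonneg.mpr hmr)]
    · rw [div_le_iff₀ hM]
      push_cast
      nlinarith [mul_nonneg hpi.le (sub_nonneg.mpr hmr)]
  have hgm1 : (3 : ℝ) / 7 ≤ g (m + 1) := by
    apply term_ge_aux γ h0 h1
    · rw [le_div_iff₀ hM]
      push_cast
      nlinarith [mul_nonneg hpi.le (sub_nonneg.mpr hmr)]
    · rw [div_le_iff₀ hM]
      push_cast
      nlinarith [mul_nonneg hpi.le (sub_nonneg.mpr hmr)]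
  have : (6 : ℝ) / 7 ≤ ∑ k ∈ Finset.Icc 1 (2 * m + 1 - 1), g k := by linarith
  simp only [hg] at this
  linarith
end

section
/- For any odd integer N ≥ 3, one has 1 - 4 Σ_{k=1}^{(N-1)/2} sin²(kπ/N)/(1 + sin²(kπ/N)) < 0. -/
open Real Finset

theorem stmt_6 (N : ℕ) (hN : 3 ≤ N) (hodd : Odd N) :
    1 - 4 * ∑ k ∈ Finset.Icc 1 ((N - 1) / 2),
      Real.sin (k * π / N) ^ 2 / (1 + Real.sin (k * π / N) ^ 2) < 0 := by
  have hN0 : (0:ℝ) < (N:ℝ) := by exact_mod_cast Nat.lt_of_lt_of_le (by norm_num) hN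
  set m := (N - 1) / 2 with hm
  have hm1 : 1 ≤ m := by omega
  have hmval : (m:ℝ) = ((N:ℝ) - 1) / 2 := by
    obtain ⟨j, hj⟩ := hodd
    have hmj : m = j := by omega
    have hN3 : 3 ≤ (N:ℝ) := by exact_mod_cast hN
    rw [hmj]
    have : (N:ℝ) = 2 * j + 1 := by exact_mod_cast hj
    rw [this]; ring
  have hangle : (m:ℝ) * π / N = π / 2 - π / (2 * N) := by
    rw [hmval]; field_simp
  have hsin : Real.sin ((m:ℝ) * π / N) = Real.cos (π / (2 * N)) := by
    rw [hangle, Real.sin_pi_div_two_sub]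
  have hcos : Real.sqrt 3 / 2 ≤ Real.cos (π / (2 * N)) := by
    rw [← Real.cos_pi_div_six]
    apply Real.cos_le_cos_of_nonneg_of_le_pi
    · positivity
    · have := Real.pi_pos
      linarith [Real.pi_le_four]
    · have hN3 : (3:ℝ) ≤ (N:ℝ) := by exact_mod_cast hN
      rw [div_le_div_iff₀ (by positivity) (by norm_num)]
      nlinarith [Real.pi_pos]
  have hsq : (3:ℝ)/4 ≤ Real.sin ((m:ℝ) * π / N) ^ 2 := by
    rw [hsin]
    have h3 : (Real.sqrt 3 / 2) ^ 2 = 3 / 4 := by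
      rw [div_pow, Real.sq_sqrt (by norm_num : (3:ℝ) ≥ 0)]; norm_num
    calc (3:ℝ)/4 = (Real.sqrt 3 / 2) ^ 2 := h3.symm
      _ ≤ Real.cos (π / (2 * N)) ^ 2 := by
          apply pow_le_pow_left₀ (by positivity) hcos
  have hterm : (3:ℝ)/7 ≤ Real.sin ((m:ℝ) * π / N) ^ 2 / (1 + Real.sin ((m:ℝ) * π / N) ^ 2) := by
    set s := Real.sin ((m:ℝ) * π / N) ^ 2
    rw [le_div_iff₀ (by positivity)]
    linarith
  have hsum : (3:ℝ)/7 ≤ ∑ k ∈ Finset.Icc 1 m,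
      Real.sin (k * π / N) ^ 2 / (1 + Real.sin (k * π / N) ^ 2) := by
    calc (3:ℝ)/7 ≤ Real.sin ((m:ℝ) * π / N) ^ 2 / (1 + Real.sin ((m:ℝ) * π / N) ^ 2) := hterm
      _ ≤ _ := by
          apply Finset.single_le_sum (f := fun k : ℕ =>
            Real.sin (k * π / N) ^ 2 / (1 + Real.sin (k * π / N) ^ 2))
          · intro i _; positivity
          · exact Finset.mem_Icc.mpr ⟨hm1, le_refl m⟩
  linarith
end

section
/- Let N ≥ 2 and 1 ≤ l < m ≤ N-1 with s_k := 2 sin(kπ/N). Assuming the denominators are nonzero, sin²((l-m)π/N)/(sin²((l-m)π/N) - (sin(lπ/N) - sin(mπ/N))²) + sin²((l+m)π/N)/(sin²((l+m)π/N) - (sin(lπ/N) + sin(mπ/N))²) = 1. -/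
open Real
theorem key (a b : ℝ)
    (h1 : Real.sin (a-b) ^ 2 - (Real.sin a - Real.sin b) ^ 2 ≠ 0)
    (h2 : Real.sin (a+b) ^ 2 - (Real.sin a + Real.sin b) ^ 2 ≠ 0) :
    Real.sin (a-b) ^ 2 / (Real.sin (a-b) ^ 2 - (Real.sin a - Real.sin b) ^ 2)
      + Real.sin (a+b) ^ 2 / (Real.sin (a+b) ^ 2 - (Real.sin a + Real.sin b) ^ 2) = 1 := by
  rw [sin_sub, sin_add] at *
  field_simp
  linear_combination
    (Real.sin b ^ 4 + Real.cos a ^ 2 * Real.sin b ^ 4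
      - 2 * Real.sin a ^ 2 * Real.sin b ^ 2 * Real.cos b ^ 2
      - Real.sin a ^ 2 * Real.sin b ^ 4) * (sin_sq_add_cos_sq a)
    + (-2 * Real.sin a ^ 2 * Real.sin b ^ 2 + Real.sin a ^ 4
      + Real.sin a ^ 4 * Real.cos b ^ 2 + Real.sin a ^ 4 * Real.sin b ^ 2) * (sin_sq_add_cos_sq b)

theorem stmt_11 (N : ℕ) (hN : 2 ≤ N) (l m : ℕ) (hl : 1 ≤ l) (hlm : l < m) (hm : m ≤ N - 1)
    (h1 : Real.sin (((l : ℝ) - m) * π / N) ^ 2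
      - (Real.sin (l * π / N) - Real.sin (m * π / N)) ^ 2 ≠ 0)
    (h2 : Real.sin (((l : ℝ) + m) * π / N) ^ 2
      - (Real.sin (l * π / N) + Real.sin (m * π / N)) ^ 2 ≠ 0) :
    Real.sin (((l : ℝ) - m) * π / N) ^ 2 /
        (Real.sin (((l : ℝ) - m) * π / N) ^ 2
          - (Real.sin (l * π / N) - Real.sin (m * π / N)) ^ 2)
      + Real.sin (((l : ℝ) + m) * π / N) ^ 2 /
        (Real.sin (((l : ℝ) + m) * π / N) ^ 2
          - (Real.sin (l * π / N) + Real.sin (m * π / N)) ^ 2) = 1 := by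
  have e1 : ((l : ℝ) - m) * π / N = l * π / N - m * π / N := by ring
  have e2 : ((l : ℝ) + m) * π / N = l * π / N + m * π / N := by ring
  rw [e1] at h1 ⊢
  rw [e2] at h2 ⊢
  exact key _ _ h1 h2
end

section
/- Let ζ_1, ..., ζ_n be complex numbers of modulus 1 satisfying Σ ζ_i = 0 with no vanishing proper subsum (i.e. Σ_{i∈J} ζ_i ≠ 0 for every nonempty proper subset J of {1,...,n}), and let M be the least positive integer with (ζ_i/ζ_j)^M = 1 for all i, j. Then every prime p dividing M satisfies p ≤ n. -/
open IntermediateField Module Polynomial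

lemma aux_indep {K : IntermediateField ℚ ℂ} {θ : ℂ} {D : ℕ}
    (hD : D ≤ (minpoly ↥K θ).natDegree) (c : Fin D → ℂ)
    (hc : ∀ d, c d ∈ K) (hsum : ∑ d, c d * θ ^ (d : ℕ) = 0) : ∀ d, c d = 0 := by
  have hli : LinearIndependent ↥K fun i : Fin (minpoly ↥K θ).natDegree => θ ^ (i : ℕ) :=
    linearIndependent_pow θ
  have hli2 : LinearIndependent ↥K fun i : Fin D => θ ^ (i : ℕ) := by
    have := hli.comp (Fin.castLE hD) (Fin.castLE_injective hD)
    exact this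
  intro d
  have h := Fintype.linearIndependent_iff.mp hli2 (fun d => ⟨c d, hc d⟩) ?_ d
  · simpa [Subtype.ext_iff] using h
  · rw [← hsum]
    congr 1

lemma aux_deg (p a m : ℕ) (hp : p.Prime) (ha : 0 < a) (hm : ¬ p ∣ m) (hm0 : 0 < m)
    (ζ : ℂ) (hζ : IsPrimitiveRoot ζ (p ^ a * m)) :
    Nat.totient (p ^ a * m)
      = Nat.totient (p ^ (a - 1) * m)
        * (minpoly ↥(IntermediateField.adjoin ℚ {ζ ^ p}) (ζ ^ m)).natDegree := by
  have hppos : 0 < p := hp.pos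
  have hMpos : 0 < p ^ a * m := Nat.mul_pos (pow_pos hppos a) hm0
  have hNpos : 0 < p ^ (a - 1) * m := Nat.mul_pos (pow_pos hppos _) hm0
  have hMN : p ^ a * m = p * (p ^ (a - 1) * m) := by
    rw [← mul_assoc, ← pow_succ']
    congr 2
    omega
  set K : IntermediateField ℚ ℂ := IntermediateField.adjoin ℚ {ζ ^ p} with hK
  set θ : ℂ := ζ ^ m with hθ
  have hζN : IsPrimitiveRoot (ζ ^ p) (p ^ (a - 1) * m) := hζ.pow hMpos hMN
  have hintζ : IsIntegral ℚ ζ := (hζ.isIntegral hMpos).tower_top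
  have hintN : IsIntegral ℚ (ζ ^ p) := hintζ.pow p
  have hintθ : IsIntegral ℚ θ := hintζ.pow m
  have hintθ' : IsIntegral ↥K θ := hintθ.tower_top
  have hfdK : FiniteDimensional ℚ ↥K := adjoin.finiteDimensional hintN
  have hfd2 : FiniteDimensional ↥K ↥(K⟮θ⟯) := adjoin.finiteDimensional hintθ'
  have heq : (K⟮θ⟯).restrictScalars ℚ = ℚ⟮ζ⟯ := by
    rw [hK]
    erw [adjoin_adjoin_left]
    apply le_antisymm
    · rw [adjoin_le_iff]
      rintro x (rfl | rfl)
      · exact pow_mem (mem_adjoin_simple_self ℚ ζ) p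
      · exact pow_mem (mem_adjoin_simple_self ℚ ζ) m
    · rw [adjoin_simple_le_iff]
      have hcop : IsCoprime (p : ℤ) (m : ℤ) := by
        rw [Int.isCoprime_iff_gcd_eq_one, Int.gcd_natCast_natCast]
        exact hp.coprime_iff_not_dvd.mpr hm
      obtain ⟨u, v, huv⟩ := hcop
      have hζne : ζ ≠ 0 := hζ.ne_zero hMpos.ne'
      have hz : (ζ ^ p) ^ u * (ζ ^ m) ^ v = ζ := by
        rw [← zpow_natCast ζ p, ← zpow_natCast ζ m, ← zpow_mul, ← zpow_mul,
          ← zpow_add₀ hζne, mul_comm (p : ℤ), mul_comm (m : ℤ), huv, zpow_one]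
      have hm1 : ζ ^ p ∈ IntermediateField.adjoin ℚ ({ζ ^ p} ∪ {θ} : Set ℂ) :=
        subset_adjoin ℚ _ (Set.mem_union_left _ rfl)
      have hm2 : ζ ^ m ∈ IntermediateField.adjoin ℚ ({ζ ^ p} ∪ {θ} : Set ℂ) :=
        subset_adjoin ℚ _ (Set.mem_union_right _ rfl)
      have hmem := mul_mem (zpow_mem hm1 u) (zpow_mem hm2 v)
      rwa [hz] at hmem
  have htower := Module.finrank_mul_finrank ℚ ↥K ↥(K⟮θ⟯)
  have hfr1 : finrank ℚ ↥((K⟮θ⟯).restrictScalars ℚ) = finrank ℚ ↥(K⟮θ⟯) := rfl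
  have hfrK : finrank ℚ ↥K = Nat.totient (p ^ (a - 1) * m) := by
    rw [hK, adjoin.finrank hintN, ← Polynomial.cyclotomic_eq_minpoly_rat hζN hNpos,
      natDegree_cyclotomic]
  have hfrL : finrank ℚ ↥(ℚ⟮ζ⟯) = Nat.totient (p ^ a * m) := by
    rw [adjoin.finrank hintζ, ← Polynomial.cyclotomic_eq_minpoly_rat hζ hMpos,
      natDegree_cyclotomic]
  rw [← hfrL, ← heq, hfr1, ← htower, hfrK, adjoin.finrank hintθ']

lemma aux_B (p a m : ℕ) (hp : p.Prime) (ha : 0 < a) (hm : ¬ p ∣ m) (hm0 : 0 < m)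
    (ζ : ℂ) (hζ : IsPrimitiveRoot ζ (p ^ a * m))
    (c : Fin p → ℂ) (hc : ∀ d, c d ∈ IntermediateField.adjoin ℚ {ζ ^ p})
    (hsum : ∑ d, c d * (ζ ^ m) ^ (d : ℕ) = 0) (h0 : ∃ d, c d = 0) : ∀ d, c d = 0 := by
  have hdeg := aux_deg p a m hp ha hm hm0 ζ hζ
  set K : IntermediateField ℚ ℂ := IntermediateField.adjoin ℚ {ζ ^ p} with hK
  set θ : ℂ := ζ ^ m with hθ
  have hppos : 0 < p := hp.pos
  have hMpos : 0 < p ^ a * m := Nat.mul_pos (pow_pos hppos a) hm0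
  have hNtpos : 0 < Nat.totient (p ^ (a - 1) * m) :=
    Nat.totient_pos.mpr (Nat.mul_pos (pow_pos hppos _) hm0)
  rcases eq_or_lt_of_le (Nat.succ_le_of_lt ha) with h1 | h2
  · -- a = 1 : degree is p - 1
    have ha1 : a = 1 := h1.symm
    subst ha1
    have hθp : IsPrimitiveRoot θ p := by
      refine hζ.pow hMpos ?_
      rw [pow_one, mul_comm]
    have hD : p - 1 ≤ (minpoly ↥K θ).natDegree := by
      have h1' : Nat.totient (p ^ 1 * m) = (p - 1) * Nat.totient (p ^ (1 - 1) * m) := by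
        simp only [pow_one, Nat.sub_self, pow_zero, one_mul]
        rw [Nat.totient_mul (hp.coprime_iff_not_dvd.mpr hm), Nat.totient_prime hp]
      have : Nat.totient (p ^ (1 - 1) * m) * (p - 1)
          = Nat.totient (p ^ (1 - 1) * m) * (minpoly ↥K θ).natDegree := by
        rw [mul_comm _ (p-1), ← h1', hdeg]
      exact le_of_eq (Nat.eq_of_mul_eq_mul_left hNtpos this)
    -- define shifted coefficients
    set L : ℂ := c ⟨p - 1, by omega⟩ with hL
    set cc : ℕ → ℂ := fun i => if h : i < p then c ⟨i, h⟩ else 0 with hcc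
    have hgeom : ∑ i ∈ Finset.range p, θ ^ i = 0 := hθp.geom_sum_eq_zero hp.one_lt
    have hsum2 : ∑ d : Fin (p - 1), (cc (d : ℕ) - L) * θ ^ (d : ℕ) = 0 := by
      rw [Fin.sum_univ_eq_sum_range (fun i => (cc i - L) * θ ^ i) (p - 1)]
      have hsplit : ∑ i ∈ Finset.range p, (cc i - L) * θ ^ i
          = ∑ i ∈ Finset.range (p - 1), (cc i - L) * θ ^ i
            + (cc (p - 1) - L) * θ ^ (p - 1) := by
        have hp1 : p = p - 1 + 1 := by omega
        conv_lhs => rw [hp1]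
        rw [Finset.sum_range_succ]
      have hfull : ∑ i ∈ Finset.range p, (cc i - L) * θ ^ i = 0 := by
        have : ∑ i ∈ Finset.range p, (cc i - L) * θ ^ i
            = ∑ i ∈ Finset.range p, cc i * θ ^ i - L * ∑ i ∈ Finset.range p, θ ^ i := by
          rw [Finset.mul_sum, ← Finset.sum_sub_distrib]
          exact Finset.sum_congr rfl fun i _ => by ring
        rw [this, hgeom, mul_zero, sub_zero,
          ← Fin.sum_univ_eq_sum_range (fun i => cc i * θ ^ i) p, ← hsum]
        refine Finset.sum_congr rfl fun d _ => ?_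
        simp [hcc, d.isLt]
      have hlast : cc (p - 1) = L := by simp [hcc, hL, Nat.sub_lt hppos one_pos]
      rw [hlast, sub_self, zero_mul, add_zero] at hsplit
      rw [← hsplit]
      exact hfull
    have hz := aux_indep hD (fun d : Fin (p - 1) => cc (d : ℕ) - L)
      (fun d => sub_mem (by simp only [hcc, dif_pos (by omega : (d : ℕ) < p)]; exact hc _)
        (hc _)) hsum2
    have hall : ∀ d : Fin p, c d = L := by
      intro d
      rcases lt_or_ge (d : ℕ) (p - 1) with hlt | hge
      · have h2 : cc (d : ℕ) - L = 0 := hz ⟨(d : ℕ), hlt⟩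
        have hccd : cc (d : ℕ) = c d := by
          simp only [hcc, dif_pos d.isLt]
        rw [hccd] at h2
        linear_combination h2
      · have hd : d = ⟨p - 1, by omega⟩ := by
          apply Fin.ext
          have := d.isLt
          simp only []
          omega
        rw [hd, hL]
    obtain ⟨d0, hd0⟩ := h0
    intro d
    rw [hall d, ← hall d0, hd0]
  · -- a ≥ 2 : degree is p
    have hdvd : p ∣ p ^ (a - 1) * m :=
      Dvd.dvd.mul_right (dvd_pow_self p (by omega)) m
    have h1' : Nat.totient (p ^ a * m) = p * Nat.totient (p ^ (a - 1) * m) := by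
      have : p ^ a * m = p * (p ^ (a - 1) * m) := by
        rw [← mul_assoc, ← pow_succ']; congr 2; omega
      rw [this, Nat.totient_mul_of_prime_of_dvd hp hdvd]
    have hD : p ≤ (minpoly ↥K θ).natDegree := by
      have : Nat.totient (p ^ (a - 1) * m) * p
          = Nat.totient (p ^ (a - 1) * m) * (minpoly ↥K θ).natDegree := by
        rw [mul_comm _ p, ← h1', hdeg]
      exact le_of_eq (Nat.eq_of_mul_eq_mul_left hNtpos this)
    exact aux_indep hD c hc hsum

theorem stmt_13 (n : ℕ) (hn : 2 ≤ n) (ζ : Fin n → ℂ)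
    (hmod : ∀ i, ‖ζ i‖ = 1)
    (hsum : ∑ i, ζ i = 0)
    (hsub : ∀ J : Finset (Fin n), J.Nonempty → J ≠ Finset.univ → ∑ i ∈ J, ζ i ≠ 0)
    (M : ℕ) (hMpos : 0 < M)
    (hM : ∀ i j, (ζ i / ζ j) ^ M = 1)
    (hMmin : ∀ M' : ℕ, 0 < M' → (∀ i j, (ζ i / ζ j) ^ M' = 1) → M ≤ M')
    (p : ℕ) (hp : p.Prime) (hpM : p ∣ M) :
    p ≤ n := by
  by_contra hpn
  push_neg at hpn
  haveI : Fact p.Prime := ⟨hp⟩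
  haveI : NeZero M := ⟨hMpos.ne'⟩
  have hζne : ∀ i, ζ i ≠ 0 := fun i h => by
    have := hmod i; rw [h] at this; simp at this
  have i0 : Fin n := ⟨0, by omega⟩
  set a : ℕ := M.factorization p with haa
  set m : ℕ := M / p ^ a with hmm
  have ha : 0 < a := hp.factorization_pos_of_dvd hMpos.ne' hpM
  have hm : ¬ p ∣ m := Nat.not_dvd_ordCompl hp hMpos.ne'
  have hMeq : p ^ a * m = M := Nat.ordProj_mul_ordCompl_eq_self M p
  have hm0 : 0 < m := Nat.ordCompl_pos p hMpos.ne'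
  obtain ⟨ξ, hξ⟩ : ∃ ξ : ℂ, IsPrimitiveRoot ξ M :=
    ⟨_, Complex.isPrimitiveRoot_exp M hMpos.ne'⟩
  have hξ' : IsPrimitiveRoot ξ (p ^ a * m) := hMeq ▸ hξ
  have hξne : ξ ≠ 0 := hξ.ne_zero hMpos.ne'
  have hη : ∀ i, (ζ i / ζ i0) ^ M = 1 := fun i => hM i i0
  choose k hk hk2 using fun i => hξ.eq_pow_of_pow_eq_one (hη i)
  have hmne : (m : ZMod p) ≠ 0 := by
    rw [Ne, ZMod.natCast_eq_zero_iff]; exact hm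
  set D : Fin n → Fin p :=
    fun i => ⟨((k i : ZMod p) * (m : ZMod p)⁻¹).val, ZMod.val_lt _⟩ with hD
  have hdvd : ∀ i, (p : ℤ) ∣ ((k i : ℤ) - (m : ℤ) * ((D i : ℕ) : ℤ)) := by
    intro i
    rw [← ZMod.intCast_zmod_eq_zero_iff_dvd]
    push_cast
    have hDi : (((D i : ℕ) : ZMod p)) = (k i : ZMod p) * (m : ZMod p)⁻¹ := by
      rw [hD]
      simp only [ZMod.natCast_val, ZMod.cast_id]
    rw [hDi]
    have hmm1 : (m : ZMod p) * ((k i : ZMod p) * (m : ZMod p)⁻¹) = (k i : ZMod p) := by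
      field_simp
    rw [hmm1, sub_self]
  set e : Fin n → ℤ := fun i => ((k i : ℤ) - (m : ℤ) * ((D i : ℕ) : ℤ)) / p with he
  have hke : ∀ i, (k i : ℤ) = (m : ℤ) * ((D i : ℕ) : ℤ) + (p : ℤ) * e i := by
    intro i
    have h2 := Int.mul_ediv_cancel' (hdvd i)
    rw [he]
    linarith [h2]
  set θ : ℂ := ξ ^ m with hθ
  set γ : Fin n → ℂ := fun i => (ξ ^ p) ^ (e i) with hγ
  have hηθ : ∀ i, ζ i / ζ i0 = θ ^ ((D i : ℕ)) * γ i := by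
    intro i
    rw [← hk2 i, ← zpow_natCast ξ (k i), hke i, zpow_add₀ hξne, zpow_mul, zpow_mul,
      zpow_natCast, zpow_natCast, hθ, hγ, zpow_natCast]
  set A : Fin p → ℂ := fun d => ∑ i ∈ Finset.univ.filter (fun i => D i = d), γ i with hA
  have hsumA : ∑ d, A d * θ ^ (d : ℕ) = 0 := by
    have h1 : ∀ d, A d * θ ^ (d : ℕ)
        = ∑ i ∈ Finset.univ.filter (fun i => D i = d), γ i * θ ^ ((D i : ℕ)) := by
      intro d
      rw [hA]
      simp only []
      rw [Finset.sum_mul]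
      refine Finset.sum_congr rfl fun i hi => ?_
      rw [Finset.mem_filter] at hi
      exact congrArg (fun t : Fin p => γ i * θ ^ (t : ℕ)) hi.2.symm
    rw [Finset.sum_congr rfl fun d _ => h1 d, Finset.sum_fiberwise]
    have h2 : ∀ i, γ i * θ ^ ((D i : ℕ)) = ζ i / ζ i0 := fun i => by rw [hηθ i]; ring
    rw [Finset.sum_congr rfl fun i _ => h2 i, ← Finset.sum_div, hsum, zero_div]
  have hcA : ∀ d, A d ∈ IntermediateField.adjoin ℚ {ξ ^ p} := fun d =>
    Subfield.sum_mem _ fun i _ =>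
      zpow_mem (IntermediateField.mem_adjoin_simple_self ℚ (ξ ^ p)) (e i)
  have h0 : ∃ d, A d = 0 := by
    have hns : ¬ Function.Surjective D := by
      intro hs
      have := Fintype.card_le_of_surjective D hs
      simp only [Fintype.card_fin] at this
      omega
    rw [Function.Surjective] at hns
    push_neg at hns
    obtain ⟨d, hd⟩ := hns
    refine ⟨d, ?_⟩
    rw [hA]
    simp only []
    rw [Finset.filter_eq_empty_iff.mpr fun i _ => hd i, Finset.sum_empty]
  have hAz : ∀ d, A d = 0 := aux_B p a m hp ha hm hm0 ξ hξ' A hcA hsumA h0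
  have hfib : ∀ i, D i = D i0 := by
    intro i
    by_contra hne
    set J := Finset.univ.filter (fun j => D j = D i) with hJ
    have hJne : J.Nonempty := ⟨i, by simp [hJ]⟩
    have hJnu : J ≠ Finset.univ := by
      intro h
      have h2 : i0 ∈ J := h ▸ Finset.mem_univ i0
      rw [hJ, Finset.mem_filter] at h2
      exact hne h2.2.symm
    refine hsub J hJne hJnu ?_
    have hζj : ∀ j ∈ J, ζ j = γ j * θ ^ ((D i : ℕ)) * ζ i0 := by
      intro j hj
      rw [hJ, Finset.mem_filter] at hj
      have := hηθ j
      rw [div_eq_iff (hζne i0)] at this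
      rw [this, hj.2]
      ring
    rw [Finset.sum_congr rfl hζj, ← Finset.sum_mul, ← Finset.sum_mul]
    have hz : ∑ j ∈ J, γ j = 0 := hAz (D i)
    rw [hz, zero_mul, zero_mul]
  set N : ℕ := p ^ (a - 1) * m with hN
  have hNpos : 0 < N := Nat.mul_pos (pow_pos hp.pos _) hm0
  have hMN : M = p * N := by
    rw [← hMeq, hN, ← mul_assoc, ← pow_succ']
    congr 2
    omega
  have hNlt : N < M := by
    have h2 := hp.two_le
    calc N < 2 * N := by omega
    _ ≤ p * N := by exact Nat.mul_le_mul_right N h2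
    _ = M := hMN.symm
  have hpowN : ∀ i j, (ζ i / ζ j) ^ N = 1 := by
    intro i j
    have hij : ζ i / ζ j = (ξ ^ p) ^ (e i - e j) := by
      have h1 : ζ i / ζ j = (ζ i / ζ i0) / (ζ j / ζ i0) := by
        rw [div_div_div_cancel_right₀]
        exact hζne i0
      rw [h1, hηθ i, hηθ j, hfib i, hfib j, hγ]
      simp only []
      rw [mul_div_mul_left _ _ (pow_ne_zero _ (hθ ▸ pow_ne_zero _ hξne)), ← zpow_sub₀ (pow_ne_zero _ hξne)]
    rw [hij, ← zpow_natCast ((ξ ^ p) ^ (e i - e j)) N, ← zpow_mul, mul_comm, zpow_mul,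
      zpow_natCast, ← pow_mul, ← hMN, hξ.pow_eq_one, one_zpow]
  have := hMmin N hNpos hpowN
  omega
end

section
/- Let ζ_1, ..., ζ_n be complex numbers of modulus 1 satisfying Σ ζ_i = 0 with no vanishing proper subsum, such that all ratios ζ_i/ζ_j are roots of unity, and let M be the least positive integer with (ζ_i/ζ_j)^M = 1 for all i, j. Then M is square-free. -/
open Polynomial Finset

theorem stmt_14 (n : ℕ) (hn : 2 ≤ n) (ζ : Fin n → ℂ)
    (hmod : ∀ i, ‖ζ i‖ = 1)
    (hsum : ∑ i, ζ i = 0)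
    (hsub : ∀ J : Finset (Fin n), J.Nonempty → J ≠ Finset.univ → ∑ i ∈ J, ζ i ≠ 0)
    (M : ℕ) (hMpos : 0 < M)
    (hM : ∀ i j, (ζ i / ζ j) ^ M = 1)
    (hMmin : ∀ M' : ℕ, 0 < M' → (∀ i j, (ζ i / ζ j) ^ M' = 1) → M ≤ M') :
    Squarefree M := by
  by_contra hsf
  rw [Nat.squarefree_iff_prime_squarefree] at hsf
  push_neg at hsf
  obtain ⟨p, hp, hpp⟩ := hsf
  have hMne : M ≠ 0 := hMpos.ne'
  have hpM : p ∣ M := (dvd_mul_right p p).trans hpp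
  set d := M / p with hd
  have hdM : d * p = M := Nat.div_mul_cancel hpM
  have hpd : p ∣ d := (Nat.dvd_div_iff_mul_dvd hpM).mpr hpp
  have hdpos : 0 < d := Nat.div_pos (Nat.le_of_dvd hMpos hpM) hp.pos
  have hdlt : d < M := Nat.div_lt_self hMpos hp.one_lt
  have hζne : ∀ i, ζ i ≠ 0 := by
    intro i h
    have := hmod i
    rw [h] at this
    simp at this
  -- primitive M-th root
  set ζM : ℂ := Complex.exp (2 * Real.pi * Complex.I / M) with hζM
  have hprim : IsPrimitiveRoot ζM M := Complex.isPrimitiveRoot_exp M hMne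
  have : NeZero M := ⟨hMne⟩
  have i0 : Fin n := ⟨0, by omega⟩
  have hex : ∀ i, ∃ m, ζM ^ m = ζ i / ζ i0 := by
    intro i
    obtain ⟨m, _, hm⟩ := hprim.eq_pow_of_pow_eq_one (hM i i0)
    exact ⟨m, hm⟩
  choose k hk using hex
  -- the polynomial
  set P : ℚ[X] := ∑ i, X ^ (k i) with hP
  have hP0 : (aeval ζM) P = 0 := by
    rw [hP]
    simp only [map_sum, map_pow, aeval_X, hk]
    rw [← Finset.sum_div, hsum, zero_div]
  have hdvd : cyclotomic M ℚ ∣ P := by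
    rw [cyclotomic_eq_minpoly_rat hprim hMpos]
    exact minpoly.dvd ℚ ζM hP0
  -- coprimality
  have hcop : ∀ j : ℕ, Nat.Coprime (1 + j * d) M := by
    intro j
    have h1 : Nat.Coprime (1 + j * d) d := by
      simpa using (Nat.coprime_add_mul_right_left 1 d j)
    have h2 : Nat.Coprime (1 + j * d) (d * d) := h1.mul_right h1
    exact h2.coprime_dvd_right (hdM ▸ mul_dvd_mul_left d hpd)
  -- μ is a primitive p-th root
  set μ : ℂ := ζM ^ d with hμ
  have hμp : μ ^ p = 1 := by rw [hμ, ← pow_mul, hdM, hprim.pow_eq_one]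
  have hμprim : IsPrimitiveRoot μ p := hprim.pow hMpos hdM.symm
  have hμr : ∀ m : ℕ, μ ^ m = μ ^ (m % p) := by
    intro m
    conv_lhs => rw [← Nat.div_add_mod m p]
    rw [pow_add, pow_mul, hμp, one_pow, one_mul]
  -- vanishing at conjugates
  have E : ∀ j : ℕ, ∑ i, (ζ i / ζ i0) * μ ^ (j * (k i % p)) = 0 := by
    intro j
    have hηprim : IsPrimitiveRoot (ζM ^ (1 + j * d)) M := hprim.pow_of_coprime _ (hcop j)
    have h1 : (aeval (ζM ^ (1 + j * d))) P = 0 := by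
      obtain ⟨Q, hQ⟩ := hdvd
      rw [hQ, map_mul]
      have : (aeval (ζM ^ (1 + j * d))) (cyclotomic M ℚ) = 0 := by
        rw [aeval_def, ← eval_map, map_cyclotomic]
        exact hηprim.isRoot_cyclotomic hMpos
      rw [this, zero_mul]
    rw [hP] at h1
    simp only [map_sum, map_pow, aeval_X] at h1
    rw [← h1]
    refine Finset.sum_congr rfl fun i _ => ?_
    have step : (ζM ^ (1 + j * d)) ^ k i = ζ i / ζ i0 * μ ^ (j * (k i % p)) := by
      rw [← pow_mul]
      have he : (1 + j * d) * k i = k i + d * (j * k i) := by ring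
      rw [he, pow_add, hk, pow_mul, ← hμ, hμr (j * k i), hμr (j * (k i % p))]
      congr 2
      conv_rhs => rw [Nat.mul_mod, Nat.mod_mod, ← Nat.mul_mod]
    rw [step]
  -- DFT inversion: each residue class subsum vanishes
  set r : ℕ := k i0 % p with hr
  have hrp : r < p := Nat.mod_lt _ hp.pos
  set J : Finset (Fin n) := univ.filter (fun i => k i % p = r) with hJ
  have hSJ : ∑ i ∈ J, ζ i = 0 := by
    have key : ∑ j ∈ range p, μ ^ (j * (p - r)) * (∑ i, (ζ i / ζ i0) * μ ^ (j * (k i % p))) = 0 := by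
      simp only [E, mul_zero, Finset.sum_const_zero]
    have inner : ∀ i : Fin n,
        ∑ j ∈ range p, μ ^ (j * ((p - r) + (k i % p))) = if k i % p = r then (p : ℂ) else 0 := by
      intro i
      have hki : k i % p < p := Nat.mod_lt _ hp.pos
      set e : ℕ := (p - r) + (k i % p) with he
      have h1 : ∀ j : ℕ, μ ^ (j * e) = (μ ^ e) ^ j := fun j => by rw [mul_comm, pow_mul]
      simp only [h1]
      by_cases hcase : k i % p = r
      · have hep : e = p := by omega
        have : μ ^ e = 1 := by rw [hep, hμp]
        simp [this, hcase]
      · rw [if_neg hcase]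
        have hne1 : μ ^ e ≠ 1 := by
          intro heq
          obtain ⟨c, hc⟩ := (hμprim.pow_eq_one_iff_dvd e).mp heq
          rcases Nat.lt_or_ge c 1 with h | h
          · have hc0 : c = 0 := by omega
            rw [hc0, Nat.mul_zero] at hc
            omega
          rcases Nat.lt_or_ge c 2 with h' | h'
          · have hc1 : c = 1 := by omega
            rw [hc1, Nat.mul_one] at hc
            omega
          · have h2 : p * 2 ≤ p * c := Nat.mul_le_mul_left p h'
            omega
        rw [geom_sum_eq hne1]
        have hep : (μ ^ e) ^ p = 1 := by rw [← pow_mul, mul_comm, pow_mul, hμp, one_pow]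
        rw [hep, sub_self, zero_div]
    have rearr : ∑ j ∈ range p, μ ^ (j * (p - r)) * (∑ i, (ζ i / ζ i0) * μ ^ (j * (k i % p)))
        = ∑ i, (ζ i / ζ i0) * ∑ j ∈ range p, μ ^ (j * ((p - r) + (k i % p))) := by
      simp only [Finset.mul_sum]
      rw [Finset.sum_comm]
      refine Finset.sum_congr rfl fun i _ => ?_
      refine Finset.sum_congr rfl fun j _ => ?_
      rw [Nat.mul_add, pow_add]
      ring
    rw [rearr] at key
    simp only [inner, mul_ite, mul_zero] at key
    rw [← Finset.sum_filter] at key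
    have key2 : (∑ i ∈ J, ζ i) * ((p : ℂ) / ζ i0) = 0 := by
      rw [← key, Finset.sum_mul]
      exact Finset.sum_congr rfl fun i _ => by ring
    have hpζ : ((p : ℂ) / ζ i0) ≠ 0 :=
      div_ne_zero (Nat.cast_ne_zero.mpr hp.pos.ne') (hζne i0)
    exact (mul_eq_zero.mp key2).resolve_right hpζ
  -- endgame
  have hJuniv : J = univ := by
    by_contra hne
    exact hsub J ⟨i0, by simp [hJ, hr]⟩ hne hSJ
  have hall : ∀ i, k i % p = r := by
    intro i
    have : i ∈ J := hJuniv ▸ Finset.mem_univ i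
    exact (Finset.mem_filter.mp this).2
  have hζMne : ζM ≠ 0 := by rw [hζM]; exact Complex.exp_ne_zero _
  have hpow : ∀ i, (ζ i / ζ i0) ^ d = ζM ^ (r * d) := by
    intro i
    rw [← hk, ← pow_mul]
    have h1 : p * (k i / p) + r = k i := by
      have := Nat.div_add_mod (k i) p
      have := hall i
      omega
    have h2 : k i * d = M * (k i / p) + r * d := by
      calc k i * d = (p * (k i / p) + r) * d := by rw [h1]
        _ = (d * p) * (k i / p) + r * d := by ring
        _ = M * (k i / p) + r * d := by rw [hdM]
    rw [h2, pow_add, pow_mul, hprim.pow_eq_one, one_pow, one_mul]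
  have hfin : ∀ i j, (ζ i / ζ j) ^ d = 1 := by
    intro i j
    have hij : ζ i / ζ j = (ζ i / ζ i0) / (ζ j / ζ i0) := by
      rw [div_div_div_cancel_right₀]
      exact hζne i0
    rw [hij, div_pow, hpow i, hpow j, div_self (pow_ne_zero _ hζMne)]
  have := hMmin d hdpos hfin
  omega
end
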